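/- Let v = (v₁,…,vₙ) be a basis of ℂⁿ and for 1 ≤ i,j ≤ n let E_{ij} ∈ Mₙ(ℂ) be the unique linear operator with E_{ij} v_k = v_i if k = j and E_{ij} v_k = 0 if k ≠ j. Then: (a) for every preorder ⪯ on {1,…,n} (a reflexive transitive relation), the linear span of {E_{ij} : i ⪯ j} is an operator algebra containing 𝒟_v = span{E_{11},…,E_{nn}}; and (b) conversely, every operator algebra in Mₙ(ℂ) containing 𝒟_v equals span{E_{ij} : i ⪯ j} for some preorder ⪯ on {1,…,n}. -/

import Mathlib

open Matrix ContinuousLinearMap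

noncomputable section

abbrev Mat (n : ℕ) := Matrix (Fin n) (Fin n) ℂ
abbrev Euc (n : ℕ) := EuclideanSpace ℂ (Fin n)

/-- An operator algebra: a complex linear subspace of matrices closed under multiplication. -/
def IsOpAlg {n : ℕ} (S : Set (Mat n)) : Prop :=
  0 ∈ S ∧ (∀ A ∈ S, ∀ B ∈ S, A + B ∈ S) ∧ (∀ (c : ℂ), ∀ A ∈ S, c • A ∈ S) ∧
    (∀ A ∈ S, ∀ B ∈ S, A * B ∈ S)

/-- Antisymmetry: `𝒜 ∩ 𝒜* ⊆ ℂ·I`. -/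
def Antisym {n : ℕ} (S : Set (Mat n)) : Prop :=
  ∀ A ∈ S, Aᴴ ∈ S → ∃ c : ℂ, A = c • (1 : Mat n)

/-- The operator on Euclidean space corresponding to a matrix. -/
def opOf {n : ℕ} (A : Mat n) : Euc n →L[ℂ] Euc n := Matrix.toEuclideanCLM (𝕜 := ℂ) A

/-- Orthogonal projection onto `E` as an endomorphism of `ℂⁿ`. -/
def oproj {n : ℕ} (E : Submodule ℂ (Euc n)) : Euc n →L[ℂ] Euc n :=
  E.subtypeL ∘L E.orthogonalProjectionOnto

def InvariantSub {n : ℕ} (S : Set (Mat n)) (E : Submodule ℂ (Euc n)) : Prop :=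
  ∀ A ∈ S, ∀ x ∈ E, opOf A x ∈ E

def SemiInvariantSub {n : ℕ} (S : Set (Mat n)) (E : Submodule ℂ (Euc n)) : Prop :=
  ∃ E₁ E₂ : Submodule ℂ (Euc n), InvariantSub S E₁ ∧ InvariantSub S E₂ ∧ E₂ ≤ E₁ ∧ E = E₁ ⊓ E₂ᗮ

/-- The compression `PAP` of a matrix to a subspace. -/
def compr {n : ℕ} (E : Submodule ℂ (Euc n)) (A : Mat n) : Euc n →L[ℂ] Euc n :=
  oproj E ∘L opOf A ∘L oproj E

/-- Hereditary antisymmetry: the compression to every semi-invariant subspace is antisymmetric. -/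
def HerAntisym {n : ℕ} (S : Set (Mat n)) : Prop :=
  ∀ E : Submodule ℂ (Euc n), SemiInvariantSub S E →
    ∀ A ∈ S, ∀ B ∈ S, compr E A = ContinuousLinearMap.adjoint (compr E B) →
      ∃ c : ℂ, compr E A = c • oproj E

/-!
Only the multiplication rule `E i j * E k l = if j = k then E i l else 0` of the matrix units
matters. It makes `span {E i j | r i j}` closed under products whenever `r` is transitive.
Conversely, if `S` is closed under products, contains every `E i i`, and `A = ∑ c i j • E i j`
lies in `S`, then `E i i * A * E j j = c i j • E i j` lies in `S`, so `S` is spanned by the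
`E i j` it contains, and `r i j :↔ E i j ∈ S` is a preorder.
-/

namespace MatrixUnits

open scoped Pointwise

variable {K R ι : Type*} {E : ι → ι → R}

section Semiring

variable [CommSemiring K] [Semiring R] [Algebra K R] [DecidableEq ι]

theorem mul_mem_span_of_trans (hE : ∀ i j k l, E i j * E k l = if j = k then E i l else 0)
    {r : ι → ι → Prop} (htrans : ∀ i j k, r i j → r j k → r i k) {a b : R}
    (ha : a ∈ Submodule.span K {M | ∃ i j, r i j ∧ M = E i j})
    (hb : b ∈ Submodule.span K {M | ∃ i j, r i j ∧ M = E i j}) :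
    a * b ∈ Submodule.span K {M | ∃ i j, r i j ∧ M = E i j} := by
  set X := {M | ∃ i j, r i j ∧ M = E i j}
  have hXX : X * X ⊆ Submodule.span K X := by
    rintro _ ⟨_, ⟨i, j, hij, rfl⟩, _, ⟨k, l, hkl, rfl⟩, rfl⟩
    simp only [hE]
    split_ifs with hjk
    · subst hjk
      exact Submodule.subset_span ⟨i, l, htrans i j l hij hkl, rfl⟩
    · exact zero_mem _
  have hle : Submodule.span K X * Submodule.span K X ≤ Submodule.span K X := by
    rw [Submodule.span_mul_span, Submodule.span_le]
    exact hXX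
  exact hle (Submodule.mul_mem_mul ha hb)

theorem corner_sum_smul [Fintype ι]
    (hE : ∀ i j k l, E i j * E k l = if j = k then E i l else 0) (c : ι → ι → K) (k l : ι) :
    E k k * (∑ i, ∑ j, c i j • E i j) * E l l = c k l • E k l := by
  simp [Finset.mul_sum, Finset.sum_mul, hE]

end Semiring

theorem eq_span_of_diag_mem [Field K] [Ring R] [Algebra K R] [Fintype ι] [DecidableEq ι]
    (hE : ∀ i j k l, E i j * E k l = if j = k then E i l else 0)
    (hspan : ∀ A, ∃ c : ι → ι → K, A = ∑ i, ∑ j, c i j • E i j)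
    (S : NonUnitalSubalgebra K R) (hdiag : ∀ i, E i i ∈ S) :
    S.toSubmodule = Submodule.span K {M | ∃ i j, E i j ∈ S ∧ M = E i j} := by
  refine le_antisymm (fun A hA => ?_) (Submodule.span_le.mpr ?_)
  · obtain ⟨c, rfl⟩ := hspan A
    refine Submodule.sum_mem _ fun i _ => Submodule.sum_mem _ fun j _ => ?_
    by_cases hc : c i j = 0
    · simp [hc]
    · have hcorner : c i j • E i j ∈ S := by
        rw [← corner_sum_smul hE]
        exact S.mul_mem (S.mul_mem (hdiag i) hA) (hdiag j)
      have hEij : E i j ∈ S := by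
        simpa [hc] using S.smul_mem (c i j)⁻¹ hcorner
      exact Submodule.smul_mem _ _ (Submodule.subset_span ⟨i, j, hEij, rfl⟩)
  · rintro _ ⟨i, j, hij, rfl⟩
    exact hij

end MatrixUnits

section OperatorAlgebra

variable {n : ℕ}

theorem isOpAlg_of_mul_mem (P : Submodule ℂ (Mat n)) (hmul : ∀ a ∈ P, ∀ b ∈ P, a * b ∈ P) :
    IsOpAlg (P : Set (Mat n)) :=
  ⟨P.zero_mem, fun _ ha _ hb => P.add_mem ha hb, fun c _ ha => P.smul_mem c ha, hmul⟩

def IsOpAlg.toNonUnitalSubalgebra {S : Set (Mat n)} (hS : IsOpAlg S) :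
    NonUnitalSubalgebra ℂ (Mat n) where
  carrier := S
  zero_mem' := hS.1
  add_mem' ha hb := hS.2.1 _ ha _ hb
  smul_mem' := hS.2.2.1
  mul_mem' ha hb := hS.2.2.2 _ ha _ hb

theorem opOf_zero : opOf (0 : Mat n) = 0 :=
  map_zero Matrix.toEuclideanCLM

theorem opOf_smul (c : ℂ) (A : Mat n) : opOf (c • A) = c • opOf A :=
  map_smul Matrix.toEuclideanCLM c A

theorem opOf_sum {ι : Type*} (s : Finset ι) (f : ι → Mat n) :
    opOf (∑ i ∈ s, f i) = ∑ i ∈ s, opOf (f i) :=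
  map_sum Matrix.toEuclideanCLM f s

theorem opOf_mul (A B : Mat n) : opOf (A * B) = opOf A * opOf B :=
  map_mul Matrix.toEuclideanCLM A B

theorem eq_of_opOf_basis (v : Module.Basis (Fin n) ℂ (Euc n)) {A B : Mat n}
    (h : ∀ k, opOf A (v k) = opOf B (v k)) : A = B :=
  Matrix.toEuclideanCLM.injective (ContinuousLinearMap.coe_injective (v.ext h))

variable (v : Module.Basis (Fin n) ℂ (Euc n)) {E : Fin n → Fin n → Mat n}
  (hE : ∀ i j k : Fin n, opOf (E i j) (v k) = if k = j then v i else 0)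
include hE

theorem mul_eq_ite_of_opOf_basis (i j k l : Fin n) :
    E i j * E k l = if j = k then E i l else 0 := by
  refine eq_of_opOf_basis v fun m => ?_
  rw [opOf_mul, mul_apply_eq_comp, hE]
  by_cases hml : m = l <;> by_cases hjk : j = k <;> simp [hml, hjk, hE, opOf_zero, eq_comm]

theorem eq_sum_smul_of_opOf_basis (A : Mat n) :
    A = ∑ i, ∑ j, v.repr (opOf A (v j)) i • E i j := by
  refine eq_of_opOf_basis v fun k => ?_
  simp only [opOf_sum, opOf_smul, _root_.sum_apply, _root_.smul_apply, hE]
  simp [v.sum_repr]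

end OperatorAlgebra

/-- Fix a basis `v` of `ℂⁿ` and the matrix units `E i j` for this basis (`E i j` sends `v j`
to `v i` and annihilates the other basis vectors). Then (a) for every preorder `⪯` on
`{1,…,n}`, `span{E i j : i ⪯ j}` is an operator algebra containing
`𝒟_v = span{E 1 1, …, E n n}`; and (b) every operator algebra containing `𝒟_v` is of this
form for some preorder. -/
theorem opAlg_containing_Dv_iff_preorder (n : ℕ) (v : Module.Basis (Fin n) ℂ (Euc n))
    (E : Fin n → Fin n → Mat n)
    (hE : ∀ i j k : Fin n, opOf (E i j) (v k) = if k = j then v i else 0) :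
    (∀ r : Fin n → Fin n → Prop, (∀ i, r i i) → (∀ i j k, r i j → r j k → r i k) →
      IsOpAlg (Submodule.span ℂ {M : Mat n | ∃ i j, r i j ∧ M = E i j} : Set (Mat n)) ∧
        (Submodule.span ℂ {M : Mat n | ∃ i, M = E i i} : Set (Mat n)) ⊆
          (Submodule.span ℂ {M : Mat n | ∃ i j, r i j ∧ M = E i j} : Set (Mat n))) ∧
    (∀ S : Set (Mat n), IsOpAlg S →
      (Submodule.span ℂ {M : Mat n | ∃ i, M = E i i} : Set (Mat n)) ⊆ S →
      ∃ r : Fin n → Fin n → Prop, (∀ i, r i i) ∧ (∀ i j k, r i j → r j k → r i k) ∧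
        S = (Submodule.span ℂ {M : Mat n | ∃ i j, r i j ∧ M = E i j} : Set (Mat n))) := by
  have hunits := mul_eq_ite_of_opOf_basis v hE
  refine ⟨fun r hrefl htrans => ⟨?_, ?_⟩, fun S hS hD => ?_⟩
  · exact isOpAlg_of_mul_mem _ fun a ha b hb =>
      MatrixUnits.mul_mem_span_of_trans hunits htrans ha hb
  · exact Submodule.span_mono fun _ ⟨i, hi⟩ => ⟨i, i, hrefl i, hi⟩
  · have hdiag : ∀ i, E i i ∈ S := fun i => hD (Submodule.subset_span ⟨i, rfl⟩)
    refine ⟨fun i j => E i j ∈ S, hdiag, fun i j k hij hjk => ?_, ?_⟩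
    · simpa [hunits] using hS.2.2.2 _ hij _ hjk
    · exact congrArg SetLike.coe <| MatrixUnits.eq_span_of_diag_mem hunits
        (fun A => ⟨_, eq_sum_smul_of_opOf_basis v hE A⟩) hS.toNonUnitalSubalgebra hdiag
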